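/- arXiv:2412.05568 — 4 statements merged into one kernel-verified Lean document; each statement's English description precedes it below -/
import Mathlib

section
/- For all integers n ≥ 1, the Rogers constant satisfies σ_n ≤ (e/(4n))^{n/2} · (n+1)! / Γ(1 + n/2). -/
open MeasureTheory Real

/-- The Rogers ratio `vol(T)/vol(S)` for a given choice of vertices `V` of a regular
`n`-simplex of edge length 2; when the `V i` are pairwise at distance 2 this is the
Rogers constant `σ_n`. -/
noncomputable def rogersRatio {n : ℕ} (V : Fin (n + 1) → EuclideanSpace ℝ (Fin n)) : ℝ :=
  (volume ((convexHull ℝ (Set.range V)) ∩ ⋃ i, Metric.closedBall (V i) 1)).toReal /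
    (volume (convexHull ℝ (Set.range V))).toReal

/-! A point `x ∈ S` with barycentric coordinates `w` satisfies `‖x - V i‖² ≥ 2 (1 - w i)²`,
because `⟪V j - V i, V k - V i⟫ ≥ 2` whenever `j, k ≠ i`. Hence `S ∩ B̄(V i, 1)` lies in the
image of `S` under the homothety of centre `V i` and ratio `1/√2`, and
`σ_n ≤ (n + 1) 2^{-n/2}`. The remaining inequality `2^{-n/2} Γ(1 + n/2) ≤ (e/(4n))^{n/2} n!`
follows from the duplication formula, the log-convexity bound `Γ(x + 1/2)² ≤ x Γ(x)²` and
Stirling's bound `n! ≥ √(2πn) (n/e)^n`. -/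

section ConvexCombination

variable {R E ι : Type*} [Field R] [LinearOrder R] [IsStrictOrderedRing R]
  [AddCommGroup E] [Module R E] [Fintype ι]

theorem exists_sum_smul_eq_of_mem_convexHull_range {V : ι → E} {x : E}
    (hx : x ∈ convexHull R (Set.range V)) :
    ∃ w : ι → R, (∀ j, 0 ≤ w j) ∧ ∑ j, w j = 1 ∧ ∑ j, w j • V j = x := by
  classical
  obtain ⟨s, w, hw0, hw1, rfl⟩ := (convexHull_range_eq_exists_affineCombination V).le hx
  have hw1' : ∑ j, Set.indicator s w j = 1 := by
    rw [Finset.sum_indicator_subset w s.subset_univ]; exact hw1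
  refine ⟨Set.indicator s w, fun j => Set.indicator_nonneg (fun j hj => hw0 j hj) j, hw1', ?_⟩
  rw [Finset.affineCombination_indicator_subset w V s.subset_univ,
    Finset.affineCombination_eq_linear_combination _ _ _ hw1']

theorem sum_smul_mem_homothety_convexHull {V : ι → E} {w : ι → R} (hw0 : ∀ j, 0 ≤ w j)
    (hw1 : ∑ j, w j = 1) {i : ι} {c : R} (hc : 0 < c) (hwi : 1 - w i ≤ c) :
    ∑ j, w j • V j ∈ AffineMap.homothety (V i) c '' convexHull R (Set.range V) := by
  classical
  set w' : ι → R := fun j => c⁻¹ * w j + if j = i then 1 - c⁻¹ else 0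
  have hw'0 : ∀ j, 0 ≤ w' j := by
    intro j
    rcases eq_or_ne j i with rfl | hj
    · have : c⁻¹ * (1 - w j) ≤ 1 := by rw [inv_mul_le_iff₀ hc]; linarith
      simp only [w', ↓reduceIte]
      linarith
    · simpa [w', hj] using mul_nonneg (inv_nonneg.2 hc.le) (hw0 j)
  have hw'1 : ∑ j, w' j = 1 := by
    simp [w', Finset.sum_add_distrib, ← Finset.mul_sum, hw1]
  refine ⟨∑ j, w' j • V j,
    mem_convexHull_of_exists_fintype w' V hw'0 hw'1 (fun j => Set.mem_range_self j) rfl, ?_⟩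
  simp only [w', add_smul, Finset.sum_add_distrib, mul_smul, ← Finset.smul_sum, ite_smul,
    zero_smul, Finset.sum_ite_eq', Finset.mem_univ, if_true, AffineMap.homothety_apply,
    vsub_eq_sub, vadd_eq_add]
  match_scalars <;> field_simp
  ring

end ConvexCombination

theorem mul_sq_sum_le_norm_sum_smul_sq {ι F : Type*} [NormedAddCommGroup F]
    [InnerProductSpace ℝ F] {s : Finset ι} {u : ι → F} {w : ι → ℝ} {c : ℝ}
    (hw : ∀ j ∈ s, 0 ≤ w j) (hu : ∀ j ∈ s, ∀ k ∈ s, c ≤ inner ℝ (u j) (u k)) :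
    c * (∑ j ∈ s, w j) ^ 2 ≤ ‖∑ j ∈ s, w j • u j‖ ^ 2 := by
  calc c * (∑ j ∈ s, w j) ^ 2 = ∑ j ∈ s, ∑ k ∈ s, w j * w k * c := by
        simp_rw [sq, Finset.sum_mul_sum, Finset.mul_sum, mul_comm c]
    _ ≤ ∑ j ∈ s, ∑ k ∈ s, w j * w k * inner ℝ (u j) (u k) :=
        Finset.sum_le_sum fun j hj => Finset.sum_le_sum fun k hk =>
          mul_le_mul_of_nonneg_left (hu j hj k hk) (mul_nonneg (hw j hj) (hw k hk))
    _ = ‖∑ j ∈ s, w j • u j‖ ^ 2 := by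
        simp_rw [← real_inner_self_eq_norm_sq, sum_inner, inner_sum, real_inner_smul_left,
          real_inner_smul_right, mul_assoc]

section RegularSimplex

variable {ι F : Type*} [NormedAddCommGroup F] [InnerProductSpace ℝ F] {V : ι → F} {a : ℝ}

theorem sq_div_two_le_inner_sub_sub (hV : ∀ j k, j ≠ k → dist (V j) (V k) = a) {i j k : ι}
    (hj : j ≠ i) (hk : k ≠ i) : a ^ 2 / 2 ≤ inner ℝ (V j - V i) (V k - V i) := by
  have hdist : ∀ {j k}, j ≠ k → ‖V j - V k‖ = a := fun h => by rw [← dist_eq_norm, hV _ _ h]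
  rcases eq_or_ne j k with rfl | hjk
  · rw [real_inner_self_eq_norm_sq, hdist hj]
    linarith [sq_nonneg a]
  · have := norm_sub_sq_real (V j - V i) (V k - V i)
    rw [sub_sub_sub_cancel_right, hdist hjk, hdist hj, hdist hk] at this
    linarith

theorem one_sub_le_of_dist_sum_smul_le [Fintype ι] (hV : ∀ j k, j ≠ k → dist (V j) (V k) = a)
    (ha : 0 < a) {w : ι → ℝ} (hw0 : ∀ j, 0 ≤ w j) (hw1 : ∑ j, w j = 1) {i : ι} {r : ℝ}
    (hr : dist (∑ j, w j • V j) (V i) ≤ r) : 1 - w i ≤ √2 * r / a := by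
  classical
  have hsub : ∑ j, w j • V j - V i = ∑ j ∈ Finset.univ.erase i, w j • (V j - V i) := by
    rw [Finset.sum_erase _ (by simp), Finset.sum_congr rfl fun j _ => smul_sub (w j) (V j) (V i),
      Finset.sum_sub_distrib, ← Finset.sum_smul, hw1, one_smul]
  have hnorm := mul_sq_sum_le_norm_sum_smul_sq (s := Finset.univ.erase i) (u := fun j => V j - V i)
    (c := a ^ 2 / 2) (fun j _ => hw0 j)
    fun j hj k hk =>
      sq_div_two_le_inner_sub_sub hV (Finset.ne_of_mem_erase hj) (Finset.ne_of_mem_erase hk)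
  rw [Finset.sum_erase_eq_sub (Finset.mem_univ i), hw1, ← hsub, ← dist_eq_norm] at hnorm
  have hr0 : 0 ≤ r := dist_nonneg.trans hr
  refine le_of_pow_le_pow_left₀ two_ne_zero (by positivity) ?_
  rw [div_pow, mul_pow, sq_sqrt zero_le_two, le_div_iff₀ (by positivity)]
  nlinarith [dist_nonneg (x := ∑ j, w j • V j) (y := V i)]

theorem convexHull_inter_closedBall_subset_homothety [Fintype ι]
    (hV : ∀ j k, j ≠ k → dist (V j) (V k) = a) (ha : 0 < a) {r : ℝ} (hr : 0 < r) (i : ι) :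
    convexHull ℝ (Set.range V) ∩ Metric.closedBall (V i) r ⊆
      AffineMap.homothety (V i) (√2 * r / a) '' convexHull ℝ (Set.range V) := by
  rintro x ⟨hx, hxr⟩
  obtain ⟨w, hw0, hw1, rfl⟩ := exists_sum_smul_eq_of_mem_convexHull_range hx
  exact sum_smul_mem_homothety_convexHull hw0 hw1 (by positivity)
    (one_sub_le_of_dist_sum_smul_le hV ha hw0 hw1 hxr)

end RegularSimplex

theorem MeasureTheory.Measure.addHaar_inter_iUnion_le_of_subset_homothety {E ι : Type*}
    [NormedAddCommGroup E] [NormedSpace ℝ E] [MeasurableSpace E] [BorelSpace E]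
    [FiniteDimensional ℝ E] (μ : Measure E) [μ.IsAddHaarMeasure] [Fintype ι] {S : Set E}
    {B : ι → Set E} {p : ι → E} {c : ℝ}
    (h : ∀ i, S ∩ B i ⊆ AffineMap.homothety (p i) c '' S) :
    μ (S ∩ ⋃ i, B i) ≤ Fintype.card ι * (ENNReal.ofReal |c ^ Module.finrank ℝ E| * μ S) := by
  rw [Set.inter_iUnion]
  calc μ (⋃ i, S ∩ B i) ≤ ∑ i, μ (S ∩ B i) := measure_iUnion_fintype_le μ _
    _ ≤ ∑ _i : ι, ENNReal.ofReal |c ^ Module.finrank ℝ E| * μ S := by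
        gcongr with i
        exact (measure_mono (h i)).trans_eq (Measure.addHaar_image_homothety μ _ _ _)
    _ = _ := by rw [Finset.sum_const, Finset.card_univ, nsmul_eq_mul]

theorem rogersRatio_le {n : ℕ} {V : Fin (n + 1) → EuclideanSpace ℝ (Fin n)}
    (hV : ∀ i j, i ≠ j → dist (V i) (V j) = 2) : rogersRatio V ≤ (n + 1) * (√2 / 2) ^ n := by
  set S := convexHull ℝ (Set.range V)
  have hc : |(√2 * 1 / 2) ^ Module.finrank ℝ (EuclideanSpace ℝ (Fin n))| = (√2 / 2) ^ n := by
    rw [finrank_euclideanSpace_fin, mul_one, abs_of_nonneg (by positivity)]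
  have hS : volume S ≠ ⊤ := ((Set.finite_range V).isCompact_convexHull ℝ).measure_lt_top.ne
  have hT := volume.addHaar_inter_iUnion_le_of_subset_homothety
    (convexHull_inter_closedBall_subset_homothety hV two_pos one_pos)
  rw [hc, Fintype.card_fin] at hT
  refine div_le_of_le_mul₀ ENNReal.toReal_nonneg (by positivity) ?_
  calc _ ≤ (((n + 1 : ℕ) : ENNReal) * (ENNReal.ofReal ((√2 / 2) ^ n) * volume S)).toReal :=
        ENNReal.toReal_mono (by finiteness) hT
    _ = (n + 1) * (√2 / 2) ^ n * (volume S).toReal := by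
        rw [ENNReal.toReal_mul, ENNReal.toReal_mul, ENNReal.toReal_natCast,
          ENNReal.toReal_ofReal (by positivity)]
        push_cast
        ring

section GammaBounds

open Nat

theorem Real.Gamma_add_half_sq_le {x : ℝ} (hx : 0 < x) :
    Gamma (x + 1 / 2) ^ 2 ≤ x * Gamma x ^ 2 := by
  have hconv := Gamma_mul_add_mul_le_rpow_Gamma_mul_rpow_Gamma hx (by linarith : 0 < x + 1)
    one_half_pos one_half_pos (add_halves 1)
  rw [show 1 / 2 * x + 1 / 2 * (x + 1) = x + 1 / 2 by ring, ← sqrt_eq_rpow, ← sqrt_eq_rpow,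
    ← sqrt_mul (Gamma_pos_of_pos hx).le, Gamma_add_one hx.ne'] at hconv
  calc Gamma (x + 1 / 2) ^ 2 ≤ √(Gamma x * (x * Gamma x)) ^ 2 :=
        pow_le_pow_left₀ (Gamma_pos_of_pos (by positivity)).le hconv 2
    _ = x * Gamma x ^ 2 := by
        rw [sq_sqrt (by have := Gamma_pos_of_pos hx; positivity)]; ring

theorem Real.Gamma_one_add_half_pow_four_le (n : ℕ) :
    Gamma (1 + n / 2) ^ 4 ≤ (n + 1) / 2 * π * (n ! / 2 ^ n) ^ 2 := by
  have hs : (0 : ℝ) < (n + 1) / 2 := by positivity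
  have hdup := Gamma_mul_Gamma_add_half ((n + 1) / 2 : ℝ)
  rw [show (2 : ℝ) * ((n + 1) / 2) = n + 1 by ring, Gamma_nat_eq_factorial,
    show (1 : ℝ) - (n + 1) = -n by ring, rpow_neg zero_le_two, rpow_natCast,
    show ((n : ℝ) + 1) / 2 + 1 / 2 = 1 + n / 2 by ring] at hdup
  have hsq := Gamma_add_half_sq_le hs
  rw [show ((n : ℝ) + 1) / 2 + 1 / 2 = 1 + n / 2 by ring] at hsq
  calc Gamma (1 + n / 2) ^ 4 = Gamma (1 + n / 2) ^ 2 * Gamma (1 + n / 2) ^ 2 := by ring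
    _ ≤ (n + 1) / 2 * Gamma ((n + 1) / 2) ^ 2 * Gamma (1 + n / 2) ^ 2 := by gcongr
    _ = (n + 1) / 2 * π * (n ! / 2 ^ n) ^ 2 := by
        rw [mul_assoc, ← mul_pow, hdup, mul_pow, sq_sqrt pi_pos.le]; ring

theorem Stirling.two_mul_pi_mul_le_sq_factorial_div (n : ℕ) :
    2 * π * n ≤ (n ! / (n / exp 1) ^ n) ^ 2 := by
  rcases n.eq_zero_or_pos with rfl | hn
  · simp
  have hP : (0 : ℝ) < (n / exp 1) ^ n := by positivity
  exact (sqrt_le_iff.mp ((le_div_iff₀ hP).mpr (le_factorial_stirling n))).2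

theorem Real.sqrt_two_div_two_pow_mul_Gamma_le {n : ℕ} (hn : n ≠ 0) :
    (√2 / 2) ^ n * Gamma (1 + n / 2) ≤ (exp 1 / (4 * n)) ^ ((n : ℝ) / 2) * n ! := by
  have hn' : (1 : ℝ) ≤ n := by exact_mod_cast Nat.one_le_iff_ne_zero.mpr hn
  have hq : ((exp 1 / (4 * n)) ^ ((n : ℝ) / 2)) ^ 4 = (exp 1 / (4 * n)) ^ (2 * n) := by
    rw [← rpow_natCast _ 4, ← rpow_mul (by positivity), ← rpow_natCast]
    push_cast; ring_nf
  have hc : (√2 / 2) ^ 4 = (1 / 4 : ℝ) := by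
    rw [div_pow, show 4 = 2 * 2 by rfl, pow_mul, sq_sqrt zero_le_two]; norm_num
  rw [← pow_le_pow_iff_left₀ (by positivity) (by positivity) four_ne_zero,
    mul_pow, mul_pow, ← pow_right_comm, hc, hq]
  calc (1 / 4) ^ n * Gamma (1 + n / 2) ^ 4
      ≤ (1 / 4) ^ n * ((n + 1) / 2 * π * (n ! / 2 ^ n) ^ 2) := by
        gcongr; exact Gamma_one_add_half_pow_four_le n
    _ ≤ (1 / 4) ^ n * (2 * π * n * (n ! / 2 ^ n) ^ 2) := by
        gcongr (1 / 4) ^ n * (?_ * _)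
        nlinarith [pi_pos]
    _ ≤ (1 / 4) ^ n * ((n ! / (n / exp 1) ^ n) ^ 2 * (n ! / 2 ^ n) ^ 2) := by
        gcongr; exact Stirling.two_mul_pi_mul_le_sq_factorial_div n
    _ = (exp 1 / (4 * n)) ^ (2 * n) * n ! ^ 4 := by
        have hbase : (n / exp 1) ^ 2 * 2 ^ 2 * (exp 1 / (4 * n)) ^ 2 = (1 / 4 : ℝ) := by
          field_simp; ring
        field_simp
        rw [← hbase, mul_pow, mul_pow, ← pow_mul, ← pow_mul, ← pow_mul, ← pow_mul, ← pow_mul]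
        ring

end GammaBounds

/-- For all `n ≥ 1`, the Rogers constant satisfies
`σ_n ≤ (e/(4n))^{n/2} · (n+1)! / Γ(1 + n/2)`. -/
theorem rogersConstant_upper_bound (n : ℕ) (hn : 1 ≤ n)
    (V : Fin (n + 1) → EuclideanSpace ℝ (Fin n))
    (hV : ∀ i j, i ≠ j → dist (V i) (V j) = 2) :
    rogersRatio V ≤ (Real.exp 1 / (4 * n)) ^ ((n : ℝ) / 2) * (Nat.factorial (n + 1)) /
      Real.Gamma (1 + (n : ℝ) / 2) := by
  have hG : 0 < Gamma (1 + (n : ℝ) / 2) := Gamma_pos_of_pos (by positivity)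
  refine (rogersRatio_le hV).trans ?_
  rw [le_div_iff₀ hG, Nat.factorial_succ, Nat.cast_mul, Nat.cast_succ]
  calc (n + 1) * (√2 / 2) ^ n * Gamma (1 + n / 2)
      = (n + 1) * ((√2 / 2) ^ n * Gamma (1 + n / 2)) := by ring
    _ ≤ (n + 1) * ((exp 1 / (4 * n)) ^ ((n : ℝ) / 2) * n.factorial) :=
        mul_le_mul_of_nonneg_left (sqrt_two_div_two_pow_mul_Gamma_le (by omega)) (by positivity)
    _ = _ := by ring
end

section
/- For every κ ≥ 24 and every θ with 0 < θ < 1/3, the equation C_{κ,θ}(u) = (κ/2)u² has exactly one solution U in the interval [0, κ^θ]; moreover this solution satisfies U ≤ 0.19. Equivalently, the polynomial P_{κ,θ}(u) = C_{κ,θ}(u) − (κ/2)u² satisfies P_{κ,θ}(0) > 0, P_{κ,θ}(κ^θ) < 0, and P_{κ,θ} has a unique root in [0, κ^θ]. -/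
open Real

/-- The constant `C₁(κ,θ)`. -/
noncomputable def C1 (κ θ : ℝ) : ℝ :=
  (1 / 8) * (2 * Real.sqrt Real.pi * Real.sqrt (1 + κ ^ (2 * θ - 2)) / Real.exp 1 +
    (6 / κ) * (1 + Real.sqrt (1 + κ ^ (2 * θ - 2)) / Real.exp 1) + 3 / κ ^ (3 : ℕ))

/-- The constant `C₂(κ,θ)`. -/
noncomputable def C2 (κ θ : ℝ) : ℝ :=
  (1 / (1 - κ ^ (θ - 1))) * (1 / (1 - κ ^ (θ - 1) / 4) + 5 / 2)

/-- The constant `C₃(κ,θ)`. -/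
noncomputable def C3 (κ θ : ℝ) : ℝ := Real.sqrt (1 + κ ^ (2 * θ - 2) / 4)

/-- The constant `C₄₁(κ,θ)`. -/
noncomputable def C41 (κ θ : ℝ) : ℝ :=
  C3 κ θ + κ ^ (3 * θ - 3) * C2 κ θ * C3 κ θ + κ ^ (θ - 1) / 4

/-- The constant `C₄₂(κ,θ)`. -/
noncomputable def C42 (κ θ : ℝ) : ℝ := C2 κ θ * (1 - 1 / (2 * κ ^ (2 : ℕ)))

/-- The function `C_{κ,θ}(u) = C₁ + C₄₁|u| + C₄₂|u|³`. -/
noncomputable def Cfun (κ θ u : ℝ) : ℝ := C1 κ θ + C41 κ θ * |u| + C42 κ θ * |u| ^ (3 : ℕ)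

set_option maxHeartbeats 1000000 in
/-- Auxiliary: positivity of the polynomial near `0`. -/
lemma auxPos (A B Cc κ u : ℝ) (hA1 : 0.163 ≤ A) (hB0 : 0 ≤ B) (hC0 : 0 ≤ Cc)
    (hκ : 24 ≤ κ) (hu0 : 0 ≤ u) (hu1 : κ * u ≤ 1.1) :
    κ / 2 * u ^ 2 < A + B * u + Cc * u ^ 3 := by
  have h1 : 24 * u ≤ 1.1 := by nlinarith
  nlinarith [mul_nonneg hB0 hu0, mul_nonneg hC0 (pow_nonneg hu0 3),
    mul_nonneg (sub_nonneg.2 hu1) hu0]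

set_option maxHeartbeats 1000000 in
/-- Auxiliary: negativity of the polynomial at the right endpoint. -/
lemma auxGK (A B Cc κ K : ℝ) (hA2 : A ≤ 0.20705) (hB2 : B ≤ 1.0389) (hB0 : 0 ≤ B)
    (hC2 : Cc ≤ 4.01388) (hC0 : 0 ≤ Cc) (hκ : 24 ≤ κ) (hK1 : 1 ≤ K) (hK3 : K ^ 3 ≤ κ) :
    A + B * K + Cc * K ^ 3 < κ / 2 * K ^ 2 := by
  have hK0 : (0:ℝ) < K := by linarith
  rcases le_total K 2.884 with h | h
  · nlinarith [mul_nonneg (sub_nonneg.2 hK1) (sub_nonneg.2 h), sq_nonneg (K - 2.884),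
      sq_nonneg (K - 1), mul_nonneg (mul_nonneg (sub_nonneg.2 hK1) (sub_nonneg.2 h)) hK0.le,
      mul_le_mul_of_nonneg_left hC2 (pow_nonneg hK0.le 3), sq_nonneg K]
  · have h5 : K ^ 3 * K ^ 2 ≤ κ * K ^ 2 := by nlinarith
    nlinarith [sq_nonneg (K - 2.884), mul_nonneg (sub_nonneg.2 h) (sq_nonneg (K - 2.884)),
      mul_le_mul_of_nonneg_left hC2 (pow_nonneg hK0.le 3),
      mul_le_mul_of_nonneg_left hB2 hK0.le, sq_nonneg K, pow_pos hK0 3]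

set_option maxHeartbeats 1000000 in
/-- Auxiliary: negativity of the polynomial on `[1/4, K]`, via concavity of
`(κ/2)u - C₄₂u² - C₄₁ - C₁/u`. -/
lemma auxNeg (A B Cc κ K u : ℝ) (hA2 : A ≤ 0.20705) (hA0 : 0 < A) (hB2 : B ≤ 1.0389)
    (hB0 : 0 ≤ B) (hC2 : Cc ≤ 4.01388) (hC0 : 0 ≤ Cc) (hκ : 24 ≤ κ) (hK1 : 1 ≤ K)
    (hK3 : K ^ 3 ≤ κ) (hu1 : 1 / 4 ≤ u) (hu2 : u ≤ K) :
    A + B * u + Cc * u ^ 3 < κ / 2 * u ^ 2 := by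
  have hK0 : (0:ℝ) < K := by linarith
  have hu0 : (0:ℝ) < u := by linarith
  have hGm : 0 < κ / 2 * (1/4:ℝ) ^ 2 - Cc * (1/4:ℝ) ^ 3 - B * (1/4:ℝ) - A := by nlinarith
  have hGK : 0 < κ / 2 * K ^ 2 - Cc * K ^ 3 - B * K - A := by
    have := auxGK A B Cc κ K hA2 hB2 hB0 hC2 hC0 hκ hK1 hK3; linarith
  have hm4 : (1/4:ℝ) < K := by linarith
  have key : (κ/2*u^2 - Cc*u^3 - B*u - A) * ((1/4)*K*(K-1/4))
      = (κ/2*(1/4:ℝ)^2 - Cc*(1/4:ℝ)^3 - B*(1/4) - A)*(u*K*(K-u))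
      + (κ/2*K^2 - Cc*K^3 - B*K - A)*(u*(1/4)*(u-1/4))
      + (u-1/4)*(K-u)*(K-1/4)*(Cc*u*(1/4)*K + A) := by ring
  have hden : 0 < (1/4:ℝ)*K*(K-1/4) := by nlinarith
  have hpos : 0 < (κ/2*u^2 - Cc*u^3 - B*u - A) * ((1/4)*K*(K-1/4)) := by
    rw [key]
    rcases eq_or_lt_of_le hu2 with rfl | hlt
    · have h2 : 0 < (κ/2*u^2 - Cc*u^3 - B*u - A)*(u*(1/4)*(u-1/4)) :=
        mul_pos hGK (by nlinarith)
      have z1 : (κ/2*(1/4:ℝ)^2 - Cc*(1/4:ℝ)^3 - B*(1/4) - A)*(u*u*(u-u)) = 0 := by ring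
      have z3 : (u-1/4)*(u-u)*(u-1/4)*(Cc*u*(1/4)*u + A) = 0 := by ring
      linarith
    · have h1 : 0 < (κ/2*(1/4:ℝ)^2 - Cc*(1/4:ℝ)^3 - B*(1/4) - A)*(u*K*(K-u)) :=
        mul_pos hGm (mul_pos (mul_pos hu0 hK0) (by linarith))
      have h2 : 0 ≤ (κ/2*K^2 - Cc*K^3 - B*K - A)*(u*(1/4)*(u-1/4)) :=
        mul_nonneg hGK.le (by nlinarith)
      have h3 : 0 ≤ (u-1/4)*(K-u)*(K-1/4)*(Cc*u*(1/4)*K + A) := by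
        have : 0 ≤ Cc*u*(1/4)*K + A := by positivity
        exact mul_nonneg (mul_nonneg (mul_nonneg (by linarith) (by linarith)) (by linarith)) this
      linarith
  have hfac : 0 < κ/2*u^2 - Cc*u^3 - B*u - A := by
    by_contra hc
    push_neg at hc
    have hn : 0 ≤ (-(κ/2*u^2 - Cc*u^3 - B*u - A)) * ((1/4)*K*(K-1/4)) :=
      mul_nonneg (neg_nonneg.2 hc) hden.le
    have hz : (-(κ/2*u^2 - Cc*u^3 - B*u - A)) * ((1/4)*K*(K-1/4))
        = -((κ/2*u^2 - Cc*u^3 - B*u - A) * ((1/4)*K*(K-1/4))) := by ring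
    rw [hz] at hn
    linarith
  linarith

set_option maxHeartbeats 1000000 in
/-- Auxiliary: strict decrease of the polynomial on the window `[1.1/κ, 1/4]`. -/
lemma auxAnti (B Cc κ a b : ℝ) (hB2 : B ≤ 1.0389) (hC2 : Cc ≤ 4.01388) (hC0 : 0 ≤ Cc)
    (hκ : 24 ≤ κ) (ha : 1.1 ≤ κ * a) (hab : a < b) (hb : b ≤ 1 / 4) :
    B * (b - a) + Cc * (b ^ 3 - a ^ 3) < κ / 2 * (b ^ 2 - a ^ 2) := by
  have ha0 : 0 < a := by nlinarith
  have hb0 : 0 < b := lt_trans ha0 hab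
  have key : B + Cc * (a^2 + a*b + b^2) < κ / 2 * (a + b) := by
    rcases le_total b 0.06 with h | h
    · nlinarith [mul_nonneg hC0 (sq_nonneg b), mul_pos ha0 hb0, sq_nonneg (a - b),
        mul_le_mul_of_nonneg_left (by nlinarith : a^2 + a*b + b^2 ≤ 3 * (0.06:ℝ)^2) hC0,
        mul_le_mul_of_nonneg_right hκ hb0.le]
    · nlinarith [mul_le_mul_of_nonneg_left (by nlinarith : a^2 + a*b + b^2 ≤ 3 * b * (1/4)) hC0,
        mul_le_mul_of_nonneg_right hκ hb0.le]
  nlinarith [mul_pos (sub_pos.2 hab) (sub_pos.2 key)]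

set_option maxHeartbeats 2000000 in
/-- For `κ ≥ 24` and `0 < θ < 1/3`, the equation `C_{κ,θ}(u) = (κ/2)u²` has a unique
solution in `[0, κ^θ]`, which moreover is at most `0.19`; equivalently
`P_{κ,θ}(u) = C_{κ,θ}(u) − (κ/2)u²` is positive at `0`, negative at `κ^θ`, and has a
unique root in `[0, κ^θ]`. -/
theorem Cfun_eq_unique_root (κ θ : ℝ) (hκ : 24 ≤ κ) (hθ0 : 0 < θ) (hθ1 : θ < 1 / 3) :
    (∃! u : ℝ, u ∈ Set.Icc 0 (κ ^ θ) ∧ Cfun κ θ u = κ / 2 * u ^ 2) ∧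
    (∀ u ∈ Set.Icc 0 (κ ^ θ), Cfun κ θ u = κ / 2 * u ^ 2 → u ≤ 0.19) ∧
    Cfun κ θ 0 - κ / 2 * (0 : ℝ) ^ 2 > 0 ∧
    Cfun κ θ (κ ^ θ) - κ / 2 * (κ ^ θ) ^ 2 < 0 := by
  have hκ0 : (0:ℝ) < κ := by linarith
  have hκ1 : (1:ℝ) ≤ κ := by linarith
  have hκ2 : (576:ℝ) ≤ κ^(2:ℕ) := by nlinarith
  have hκ3 : (13824:ℝ) ≤ κ^(3:ℕ) := by nlinarith
  set x := κ ^ (θ - 1) with hxdef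
  have hx0 : 0 < x := Real.rpow_pos_of_pos hκ0 _
  have h2 : κ ^ (2*θ - 2) = x^2 := by
    rw [hxdef, show 2*θ-2 = (θ-1)*2 by ring, Real.rpow_mul hκ0.le,
      show ((2:ℝ)) = ((2:ℕ):ℝ) by norm_num, Real.rpow_natCast]
  have h3 : κ ^ (3*θ - 3) = x^3 := by
    rw [hxdef, show 3*θ-3 = (θ-1)*3 by ring, Real.rpow_mul hκ0.le,
      show ((3:ℝ)) = ((3:ℕ):ℝ) by norm_num, Real.rpow_natCast]
  have hx3 : x^3 ≤ 1/576 := by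
    rw [← h3]
    calc κ ^ (3*θ-3) ≤ κ ^ (-2:ℝ) :=
          Real.rpow_le_rpow_of_exponent_le hκ1 (by linarith)
      _ = (κ^(2:ℕ))⁻¹ := by
          rw [Real.rpow_neg hκ0.le, show ((2:ℝ)) = ((2:ℕ):ℝ) by norm_num, Real.rpow_natCast]
      _ ≤ 1/576 := by
          rw [inv_eq_one_div]
          apply div_le_div_of_nonneg_left (by norm_num) (by norm_num) hκ2
  have hxu : x ≤ 0.1203 := by nlinarith [hx3, hx0, sq_nonneg (x - 0.1203), sq_nonneg (x + 0.1203)]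
  have hx2 : x^2 ≤ 0.01448 := by nlinarith [hxu, hx0, sq_nonneg x]
  have hK1 : 1 ≤ κ ^ θ := by
    rw [show (1:ℝ) = κ ^ (0:ℝ) by rw [Real.rpow_zero]]
    exact Real.rpow_le_rpow_of_exponent_le hκ1 hθ0.le
  have hK3 : (κ ^ θ)^(3:ℕ) ≤ κ := by
    rw [← Real.rpow_natCast (κ ^ θ) 3, ← Real.rpow_mul hκ0.le]
    calc κ ^ (θ * 3) ≤ κ ^ (1:ℝ) := Real.rpow_le_rpow_of_exponent_le hκ1 (by linarith)
      _ = κ := Real.rpow_one κ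
  -- bounds on π, e and the square roots
  have he1 : (2.7182818:ℝ) < Real.exp 1 := by
    have := Real.exp_one_gt_d9; norm_num at this ⊢; linarith
  have he2 : Real.exp 1 < 2.7182819 := by
    have := Real.exp_one_lt_d9; norm_num at this ⊢; linarith
  have he0 : (0:ℝ) < Real.exp 1 := Real.exp_pos 1
  have hsq : Real.sqrt π ^ 2 = π := Real.sq_sqrt Real.pi_pos.le
  have hsπ0 : 0 ≤ Real.sqrt π := Real.sqrt_nonneg π
  have hsπ2 : Real.sqrt π ≤ 1.77246 := by nlinarith [Real.pi_lt_d6]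
  have hsπ1 : 1.7724 ≤ Real.sqrt π := by nlinarith [Real.pi_gt_d6]
  have hs1sq : Real.sqrt (1+x^2) ^ 2 = 1 + x^2 := Real.sq_sqrt (by positivity)
  have hs10 : 0 ≤ Real.sqrt (1+x^2) := Real.sqrt_nonneg _
  have hs1u : Real.sqrt (1+x^2) ≤ 1.00722 := by nlinarith
  have hs1l : 1 ≤ Real.sqrt (1+x^2) := by nlinarith
  have hc3sq : Real.sqrt (1+x^2/4) ^ 2 = 1 + x^2/4 := Real.sq_sqrt (by positivity)
  have hc30 : 0 ≤ Real.sqrt (1+x^2/4) := Real.sqrt_nonneg _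
  have hc3u : Real.sqrt (1+x^2/4) ≤ 1.00181 := by nlinarith
  have hc3l : 1 ≤ Real.sqrt (1+x^2/4) := by nlinarith
  -- bounds on the constants
  have hA2 : C1 κ θ ≤ 0.20705 := by
    rw [C1, h2]
    have ht1 : 2 * Real.sqrt π * Real.sqrt (1+x^2) / Real.exp 1 ≤ 1.31352 := by
      rw [div_le_iff₀ he0]
      linarith [mul_le_mul hsπ2 hs1u hs10 (by norm_num : (0:ℝ) ≤ 1.77246)]
    have hq2 : Real.sqrt (1+x^2) / Real.exp 1 ≤ 0.370541 := by
      rw [div_le_iff₀ he0]; linarith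
    have hq2' : 0 ≤ Real.sqrt (1+x^2) / Real.exp 1 := by positivity
    have h6 : 6/κ ≤ 0.25 := by rw [div_le_iff₀ hκ0]; linarith
    have h6' : 0 ≤ 6/κ := by positivity
    have ht2 : (6/κ) * (1 + Real.sqrt (1+x^2) / Real.exp 1) ≤ 0.25 * 1.370541 :=
      mul_le_mul h6 (by linarith) (by linarith) (by norm_num)
    have ht3 : 3/κ^(3:ℕ) ≤ 0.000218 := by
      rw [div_le_iff₀ (by positivity)]
      linarith
    linarith
  have hA1 : (0.163:ℝ) ≤ C1 κ θ := by
    rw [C1, h2]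
    have ht1 : (1.304:ℝ) ≤ 2 * Real.sqrt π * Real.sqrt (1+x^2) / Real.exp 1 := by
      rw [le_div_iff₀ he0]
      linarith [mul_le_mul hsπ1 hs1l (by norm_num : (0:ℝ) ≤ 1) hsπ0]
    have ht2 : 0 ≤ (6/κ) * (1 + Real.sqrt (1+x^2) / Real.exp 1) := by positivity
    have ht3 : 0 ≤ 3/κ^(3:ℕ) := by positivity
    linarith
  have hA0 : 0 < C1 κ θ := by linarith
  have hC2eq : C2 κ θ = (1/(1-x)) * (1/(1-x/4) + 5/2) := by rw [C2]
  have hy0 : (0:ℝ) < 1 - x := by linarith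
  have hz0 : (0:ℝ) < 1 - x/4 := by linarith
  have hiy : 1/(1-x) ≤ 1.1367513 := by rw [div_le_iff₀ hy0]; linarith
  have hiz : 1/(1-x/4) ≤ 1.031008 := by rw [div_le_iff₀ hz0]; linarith
  have hiy0 : 0 ≤ 1/(1-x) := by positivity
  have hiz0 : 0 ≤ 1/(1-x/4) := by positivity
  have hC2u : C2 κ θ ≤ 4.01388 := by
    rw [hC2eq]
    calc (1/(1-x)) * (1/(1-x/4) + 5/2) ≤ 1.1367513 * (1.031008 + 5/2) :=
          mul_le_mul hiy (by linarith) (by linarith) (by norm_num)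
      _ ≤ 4.01388 := by norm_num
  have hC2_0 : 0 ≤ C2 κ θ := by rw [hC2eq]; positivity
  have hB2 : C41 κ θ ≤ 1.0389 := by
    rw [C41, C3, h2, h3, ← hxdef]
    have hmid : x^3 * C2 κ θ * Real.sqrt (1+x^2/4) ≤ (1/576) * 4.01388 * 1.00181 := by
      apply mul_le_mul _ hc3u hc30 (by norm_num)
      exact mul_le_mul hx3 hC2u hC2_0 (by norm_num)
    linarith [hc3u, hxu]
  have hB1 : (1:ℝ) ≤ C41 κ θ := by
    rw [C41, C3, h2, h3, ← hxdef]
    have hmid : 0 ≤ x^3 * C2 κ θ * Real.sqrt (1+x^2/4) := by positivity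
    linarith [hc3l, hx0.le]
  have hB0 : 0 ≤ C41 κ θ := by linarith
  have hfac1 : 1 - 1/(2*κ^(2:ℕ)) ≤ 1 := by
    have : 0 < 1/(2*κ^(2:ℕ)) := by positivity
    linarith
  have hfac0 : 0 ≤ 1 - 1/(2*κ^(2:ℕ)) := by
    have h1 : 1/(2*κ^(2:ℕ)) ≤ 1/1152 := by
      apply div_le_div_of_nonneg_left (by norm_num) (by norm_num) (by linarith)
    linarith
  have hCcu : C42 κ θ ≤ 4.01388 := by
    rw [C42]
    calc C2 κ θ * (1 - 1/(2*κ^(2:ℕ))) ≤ C2 κ θ * 1 :=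
          mul_le_mul_of_nonneg_left hfac1 hC2_0
      _ = C2 κ θ := mul_one _
      _ ≤ 4.01388 := hC2u
  have hCc0 : 0 ≤ C42 κ θ := by rw [C42]; exact mul_nonneg hC2_0 hfac0
  -- abbreviations
  set A := C1 κ θ
  set B := C41 κ θ
  set Cc := C42 κ θ
  have hCfun : ∀ v : ℝ, 0 ≤ v → Cfun κ θ v = A + B * v + Cc * v ^ 3 := by
    intro v hv
    rw [Cfun, abs_of_nonneg hv]
  -- the three regime facts
  have hQneg : ∀ w : ℝ, 1/4 ≤ w → w ≤ κ ^ θ → A + B * w + Cc * w ^ 3 < κ/2 * w ^ 2 :=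
    fun w h1 h2 => auxNeg A B Cc κ (κ ^ θ) w hA2 hA0 hB2 hB0 hCcu hCc0 hκ hK1 hK3 h1 h2
  have hwin : ∀ w ∈ Set.Icc (0:ℝ) (κ ^ θ), Cfun κ θ w = κ/2 * w ^ 2 →
      1.1 ≤ κ * w ∧ w < 1/4 := by
    intro w hw heq
    rw [hCfun w hw.1] at heq
    constructor
    · by_contra hc
      push_neg at hc
      have := auxPos A B Cc κ w hA1 hB0 hCc0 hκ hw.1 hc.le
      linarith
    · by_contra hc
      push_neg at hc
      have := hQneg w hc hw.2
      linarith
  have hanti : ∀ a b : ℝ, 1.1 ≤ κ * a → a < b → b ≤ 1/4 →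
      A + B * b + Cc * b ^ 3 - κ/2 * b ^ 2 < A + B * a + Cc * a ^ 3 - κ/2 * a ^ 2 := by
    intro a b h1 h2 h3
    have := auxAnti B Cc κ a b hB2 hCcu hCc0 hκ h1 h2 h3
    linarith
  -- existence of a root by the intermediate value theorem
  have hq14 : (1/4:ℝ) ≤ κ ^ θ := by linarith
  have hf4 : A + B * (1/4:ℝ) + Cc * (1/4:ℝ) ^ 3 - κ/2 * (1/4:ℝ) ^ 2 < 0 := by
    have := hQneg (1/4) le_rfl hq14
    linarith
  have hcont : ContinuousOn (fun u : ℝ => A + B * u + Cc * u ^ 3 - κ/2 * u ^ 2)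
      (Set.Icc 0 (1/4)) := by
    apply Continuous.continuousOn
    continuity
  have hmem0 : (0:ℝ) ∈ Set.Icc ((fun u : ℝ => A + B * u + Cc * u ^ 3 - κ/2 * u ^ 2) (1/4))
      ((fun u : ℝ => A + B * u + Cc * u ^ 3 - κ/2 * u ^ 2) 0) := by
    refine Set.mem_Icc.2 ⟨?_, ?_⟩
    · show A + B * (1/4) + Cc * (1/4) ^ 3 - κ/2 * (1/4) ^ 2 ≤ 0
      linarith
    · show (0:ℝ) ≤ A + B * 0 + Cc * 0 ^ 3 - κ/2 * 0 ^ 2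
      norm_num
      linarith
  obtain ⟨U, hUmem, hfU⟩ :=
    intermediate_value_Icc' (by norm_num : (0:ℝ) ≤ 1/4) hcont hmem0
  have hU0 : 0 ≤ U := hUmem.1
  have hUK : U ∈ Set.Icc (0:ℝ) (κ ^ θ) := ⟨hU0, le_trans hUmem.2 hq14⟩
  have hUeq : Cfun κ θ U = κ/2 * U ^ 2 := by
    rw [hCfun U hU0]
    have : A + B * U + Cc * U ^ 3 - κ/2 * U ^ 2 = 0 := hfU
    linarith
  have hroot0 : ∀ w ∈ Set.Icc (0:ℝ) (κ ^ θ), Cfun κ θ w = κ/2 * w ^ 2 →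
      A + B * w + Cc * w ^ 3 - κ/2 * w ^ 2 = 0 := by
    intro w hw heq
    rw [hCfun w hw.1] at heq
    linarith
  have huniq : ∀ v ∈ Set.Icc (0:ℝ) (κ ^ θ), Cfun κ θ v = κ/2 * v ^ 2 → v = U := by
    intro v hv hveq
    obtain ⟨hv1, hv2⟩ := hwin v hv hveq
    obtain ⟨hu1, hu2⟩ := hwin U hUK hUeq
    have hQv := hroot0 v hv hveq
    have hQU := hroot0 U hUK hUeq
    rcases lt_trichotomy v U with h | h | h
    · exfalso
      have := hanti v U hv1 h hu2.le
      linarith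
    · exact h
    · exfalso
      have := hanti U v hu1 h hv2.le
      linarith
  refine ⟨⟨U, ⟨hUK, hUeq⟩, fun v hv => huniq v hv.1 hv.2⟩, ?_, ?_, ?_⟩
  · -- any root is at most 0.19
    intro u hu hueq
    by_contra hc
    push_neg at hc
    obtain ⟨hu1, hu2⟩ := hwin u hu hueq
    have hQu := hroot0 u hu hueq
    have h19 : 1.1 ≤ κ * 0.19 := by linarith
    have hstep := hanti 0.19 u h19 hc hu2.le
    have h19neg : A + B * 0.19 + Cc * 0.19 ^ 3 - κ/2 * 0.19 ^ 2 < 0 := by norm_num; linarith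
    linarith
  · -- positive at 0
    rw [hCfun 0 le_rfl]
    norm_num
    linarith
  · -- negative at κ ^ θ
    rw [hCfun (κ ^ θ) (by linarith)]
    have := hQneg (κ ^ θ) (by linarith) le_rfl
    linarith
end

section
/- For every complex number ν with Re(ν) > 0, the following integration-by-parts identity holds: ∫₀^∞ e^{−y² − νy} dy = 1/ν − 2/ν³ + 12/ν⁵ − (8/ν⁵) · ∫₀^∞ y e^{−y² − νy} (ν²y² + 3νy + 3) dy, both integrals being absolutely convergent. -/
/-!
Write `E(y) = e^{-y² - νy}`. For every polynomial `P` one has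
`(P E)' = (P' - (2y + ν) P) E`, and for `P = 4/ν³ y² + (12/ν⁴ - 2/ν²) y + (1/ν - 2/ν³ + 12/ν⁵)`
this is `-(1 + (8/ν⁵) y (ν²y² + 3νy + 3)) E`. A polynomial times a complex Gaussian is `o(y^s)`
at `+∞` for every `s`, hence integrable on `(0, ∞)` and tending to `0`, so the fundamental
theorem of calculus gives `∫₀^∞ E + (8/ν⁵) ∫₀^∞ y E (ν²y² + 3νy + 3) = P(0)`.
-/

open MeasureTheory Set Filter Topology Asymptotics Polynomial

namespace Complex

lemma isLittleO_pow_mul_cexp_quadratic_atTop {a : ℂ} (ha : a.re < 0) (b : ℂ) (n : ℕ)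
    (s : ℝ) :
    (fun x : ℝ => (x : ℂ) ^ n * cexp (a * x ^ 2 + b * x)) =o[atTop] (· ^ s) := by
  have hpow : (fun x : ℝ => (x : ℂ) ^ n) =O[atTop] fun x : ℝ => x ^ (n : ℝ) := by
    refine IsBigO.of_norm_eventuallyLE ?_
    filter_upwards [eventually_ge_atTop 0] with x hx
    simp [abs_of_nonneg hx]
  refine (hpow.mul_isLittleO (cexp_neg_quadratic_isLittleO_rpow_atTop ha b (s - n))).congr'
    EventuallyEq.rfl ?_
  filter_upwards [eventually_gt_atTop 0] with x hx
  rw [← Real.rpow_add hx, add_sub_cancel]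

lemma isLittleO_eval_mul_cexp_quadratic_atTop {a : ℂ} (ha : a.re < 0) (b : ℂ) (p : ℂ[X])
    (s : ℝ) :
    (fun x : ℝ => p.eval (x : ℂ) * cexp (a * x ^ 2 + b * x)) =o[atTop] (· ^ s) := by
  induction p using Polynomial.induction_on' with
  | add p q hp hq => simpa only [eval_add, add_mul] using hp.add hq
  | monomial n c =>
    simpa only [eval_monomial, mul_assoc] using
      (isLittleO_pow_mul_cexp_quadratic_atTop ha b n s).const_mul_left c

lemma integrableOn_Ioi_eval_mul_cexp_quadratic {a : ℂ} (ha : a.re < 0) (b : ℂ) (p : ℂ[X])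
    (c : ℝ) :
    IntegrableOn (fun x : ℝ => p.eval (x : ℂ) * cexp (a * x ^ 2 + b * x)) (Ioi c) := by
  have hcont : Continuous fun x : ℝ => p.eval (x : ℂ) * cexp (a * x ^ 2 + b * x) := by fun_prop
  refine (hcont.locallyIntegrable.locallyIntegrableOn (Ici c)).integrableOn_of_isBigO_atTop
    (isLittleO_eval_mul_cexp_quadratic_atTop ha b p (-2)).isBigO
    (integrableAtFilter_rpow_atTop_iff.mpr (by norm_num)) |>.mono_set Ioi_subset_Ici_self

lemma tendsto_eval_mul_cexp_quadratic_atTop {a : ℂ} (ha : a.re < 0) (b : ℂ) (p : ℂ[X]) :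
    Tendsto (fun x : ℝ => p.eval (x : ℂ) * cexp (a * x ^ 2 + b * x)) atTop (𝓝 0) :=
  (isLittleO_eval_mul_cexp_quadratic_atTop ha b p (-1)).trans_tendsto
    (tendsto_rpow_neg_atTop one_pos)

lemma hasDerivAt_eval_mul_cexp_quadratic (a b : ℂ) (p : ℂ[X]) (x : ℝ) :
    HasDerivAt (fun x : ℝ => p.eval (x : ℂ) * cexp (a * x ^ 2 + b * x))
      ((derivative p + p * (C (2 * a) * X + C b)).eval (x : ℂ) * cexp (a * x ^ 2 + b * x)) x := by
  have hquad : HasDerivAt (fun z : ℂ => a * z ^ 2 + b * z) (2 * a * x + b) (x : ℂ) :=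
    (((hasDerivAt_pow 2 (x : ℂ)).const_mul a).add
      ((hasDerivAt_id (x : ℂ)).const_mul b)).congr_deriv (by norm_num; ring)
  refine (((p.hasDerivAt (x : ℂ)).mul hquad.cexp).comp_ofReal).congr_deriv ?_
  simp only [eval_add, eval_mul, eval_C, eval_X]
  ring

theorem integral_Ioi_eval_mul_cexp_quadratic {a : ℂ} (ha : a.re < 0) (b : ℂ) (p : ℂ[X])
    (c : ℝ) :
    ∫ x in Ioi c, (derivative p + p * (C (2 * a) * X + C b)).eval (x : ℂ) *
        cexp (a * x ^ 2 + b * x) = -(p.eval (c : ℂ) * cexp (a * c ^ 2 + b * c)) := by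
  rw [integral_Ioi_of_hasDerivAt_of_tendsto'
    (fun x _ => hasDerivAt_eval_mul_cexp_quadratic a b p x)
    (integrableOn_Ioi_eval_mul_cexp_quadratic ha b _ c)
    (tendsto_eval_mul_cexp_quadratic_atTop ha b p), zero_sub]

lemma integrableOn_Ioi_eval_mul_cexp_neg_sq_sub_mul (ν : ℂ) (p : ℂ[X]) (c : ℝ) :
    IntegrableOn (fun x : ℝ => p.eval (x : ℂ) * cexp (-(x : ℂ) ^ 2 - ν * x)) (Ioi c) := by
  simpa [sub_eq_add_neg] using
    integrableOn_Ioi_eval_mul_cexp_quadratic (a := -1) (by norm_num) (-ν) p c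

theorem integral_Ioi_eval_mul_cexp_neg_sq_sub_mul (ν : ℂ) (p : ℂ[X]) (c : ℝ) :
    ∫ x in Ioi c, (derivative p - p * (2 * X + C ν)).eval (x : ℂ) * cexp (-(x : ℂ) ^ 2 - ν * x) =
      -(p.eval (c : ℂ) * cexp (-(c : ℂ) ^ 2 - ν * c)) := by
  have hpoly : derivative p - p * (2 * X + C ν) = derivative p + p * (C (2 * -1) * X + C (-ν)) := by
    simp only [map_mul, map_neg, map_one, C_ofNat]
    ring
  simpa [hpoly, sub_eq_add_neg] using
    integral_Ioi_eval_mul_cexp_quadratic (a := -1) (by norm_num) (-ν) p c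

end Complex

noncomputable def expSqAntiderivPoly (ν : ℂ) : ℂ[X] :=
  C (4 / ν ^ 3) * X ^ 2 + C (12 / ν ^ 4 - 2 / ν ^ 2) * X + C (1 / ν - 2 / ν ^ 3 + 12 / ν ^ 5)

lemma eval_derivative_sub_mul_expSqAntiderivPoly {ν : ℂ} (hν : ν ≠ 0) (z : ℂ) :
    (derivative (expSqAntiderivPoly ν) - expSqAntiderivPoly ν * (2 * X + C ν)).eval z =
      -(1 + 8 / ν ^ 5 * (z * (ν ^ 2 * z ^ 2 + 3 * ν * z + 3))) := by
  simp only [expSqAntiderivPoly, derivative_add, derivative_mul, derivative_C, derivative_X_pow,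
    derivative_X, eval_add, eval_sub, eval_mul, eval_zero, eval_one, eval_C, eval_X, eval_pow,
    eval_ofNat]
  field_simp
  ring

lemma eval_zero_expSqAntiderivPoly (ν : ℂ) :
    (expSqAntiderivPoly ν).eval 0 = 1 / ν - 2 / ν ^ 3 + 12 / ν ^ 5 := by
  simp [expSqAntiderivPoly]

/-- For every complex `ν` with `Re ν > 0`,
`∫₀^∞ e^{−y²−νy} dy = 1/ν − 2/ν³ + 12/ν⁵ − (8/ν⁵) ∫₀^∞ y e^{−y²−νy}(ν²y² + 3νy + 3) dy`,
both integrals being absolutely convergent. -/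
theorem integral_exp_sq_integration_by_parts (ν : ℂ) (hν : 0 < ν.re) :
    IntegrableOn (fun y : ℝ => Complex.exp (-(y : ℂ) ^ 2 - ν * y)) (Set.Ioi 0) ∧
    IntegrableOn (fun y : ℝ => (y : ℂ) * Complex.exp (-(y : ℂ) ^ 2 - ν * y) *
      (ν ^ 2 * (y : ℂ) ^ 2 + 3 * ν * y + 3)) (Set.Ioi 0) ∧
    ∫ y in Set.Ioi (0 : ℝ), Complex.exp (-(y : ℂ) ^ 2 - ν * y) =
      1 / ν - 2 / ν ^ 3 + 12 / ν ^ 5 - (8 / ν ^ 5) *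
        ∫ y in Set.Ioi (0 : ℝ), (y : ℂ) * Complex.exp (-(y : ℂ) ^ 2 - ν * y) *
          (ν ^ 2 * (y : ℂ) ^ 2 + 3 * ν * y + 3) := by
  have hν0 : ν ≠ 0 := by rintro rfl; simp at hν
  have hE := by simpa using Complex.integrableOn_Ioi_eval_mul_cexp_neg_sq_sub_mul ν 1 0
  have hG : IntegrableOn (fun y : ℝ => (y : ℂ) * Complex.exp (-(y : ℂ) ^ 2 - ν * y) *
      (ν ^ 2 * (y : ℂ) ^ 2 + 3 * ν * y + 3)) (Ioi 0) := by
    refine (Complex.integrableOn_Ioi_eval_mul_cexp_neg_sq_sub_mul ν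
      (X * (C (ν ^ 2) * X ^ 2 + C (3 * ν) * X + 3)) 0).congr_fun (fun y _ => ?_) measurableSet_Ioi
    simp only [eval_mul, eval_X, eval_add, eval_pow, eval_C, eval_ofNat]
    ring
  refine ⟨hE, hG, ?_⟩
  have hsplit (y : ℂ) (E : ℂ) : -(1 + 8 / ν ^ 5 * (y * (ν ^ 2 * y ^ 2 + 3 * ν * y + 3))) * E =
      -(E + 8 / ν ^ 5 * (y * E * (ν ^ 2 * y ^ 2 + 3 * ν * y + 3))) := by ring
  have key := Complex.integral_Ioi_eval_mul_cexp_neg_sq_sub_mul ν (expSqAntiderivPoly ν) 0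
  simp only [eval_derivative_sub_mul_expSqAntiderivPoly hν0, hsplit, integral_neg, neg_inj,
    integral_add hE (hG.const_mul _), integral_const_mul, Complex.ofReal_zero,
    eval_zero_expSqAntiderivPoly, zero_pow two_ne_zero, neg_zero, mul_zero, sub_zero,
    Complex.exp_zero, mul_one] at key
  linear_combination key
end

section
/- Let κ > 1, 0 < θ < 1/3, u ∈ ℝ with |u| ≤ κ^θ, and ν = 2κ(1 − iu/κ). Then | 2κ e^{−iu/κ} ∫₀^∞ e^{−y² − νy} dy − ( 1 − (u² + 1)/(2κ²) ) | ≤ C_{κ,θ}(u)/κ³, where C_{κ,θ}(u) = C₁ + C₄₁·|u| + C₄₂·|u|³. -/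
/-!
Put `x = u / κ`, so that `ν = 2κ(1 - ix)` and `|x| ≤ κ^(θ-1) ≤ 1`. Since
`|e^{-y²} - 1 + y²| ≤ y⁴/2` and `∫₀^∞ yⁿ e^{-νy} dy = n!/ν^{n+1}`, the integral equals
`1/ν - 2/ν³` up to an error of at most `12/(Re ν)⁵ = 3/(8κ⁵)`. After multiplication by
`2κ e^{-ix}` the two main terms are `e^{-ix}/(1 - ix)` and `e^{-ix}/(2κ²(1 - ix)³)`, which differ
from `1 - x²/2` and `1/(2κ²)` by at most `(13/18)|x|³` and `|x|/κ²`. Multiplied by `κ³`, the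
total error `(13/18)|u|³ + |u| + 3/(4κ)` is dominated term by term by `C_{κ,θ}(u)`.
-/

open Real MeasureTheory

open Complex Filter Set Topology
open scoped Nat

lemma norm_ofReal_pow_mul_cexp_neg_mul (ν : ℂ) (n : ℕ) {t : ℝ} (ht : 0 ≤ t) :
    ‖(t : ℂ) ^ n * cexp (-(ν * t))‖ = t ^ n * rexp (-(ν.re * t)) := by
  simp [norm_exp, abs_of_nonneg ht]

lemma integrableOn_pow_mul_exp_neg_mul_Ioi {c : ℝ} (hc : 0 < c) (n : ℕ) :
    IntegrableOn (fun t : ℝ => t ^ n * rexp (-(c * t))) (Ioi 0) := by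
  have hn : (-1 : ℝ) < n := by linarith [n.cast_nonneg (α := ℝ)]
  refine (integrableOn_rpow_mul_exp_neg_mul_rpow hn one_pos hc).congr_fun (fun t _ => ?_)
    measurableSet_Ioi
  simp [Real.rpow_natCast]

lemma integrableOn_pow_mul_cexp_neg_mul_Ioi {ν : ℂ} (hν : 0 < ν.re) (n : ℕ) :
    IntegrableOn (fun t : ℝ => (t : ℂ) ^ n * cexp (-(ν * t))) (Ioi 0) := by
  refine (integrableOn_pow_mul_exp_neg_mul_Ioi hν n).mono' (by fun_prop) ?_
  filter_upwards [ae_restrict_mem measurableSet_Ioi] with t ht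
  exact (norm_ofReal_pow_mul_cexp_neg_mul ν n (le_of_lt ht)).le

lemma tendsto_pow_mul_cexp_neg_mul_atTop {ν : ℂ} (hν : 0 < ν.re) (n : ℕ) :
    Tendsto (fun t : ℝ => (t : ℂ) ^ n * cexp (-(ν * t))) atTop (𝓝 0) := by
  refine squeeze_zero_norm' ?_ ((tendsto_rpow_mul_exp_neg_mul_atTop_nhds_zero n ν.re hν))
  filter_upwards [eventually_ge_atTop 0] with t ht
  rw [norm_ofReal_pow_mul_cexp_neg_mul ν n ht, Real.rpow_natCast, neg_mul]

lemma integral_pow_succ_mul_cexp_neg_mul_Ioi {ν : ℂ} (hν : 0 < ν.re) (n : ℕ) :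
    ∫ t in Ioi (0 : ℝ), (t : ℂ) ^ (n + 1) * cexp (-(ν * t)) =
      (n + 1) / ν * ∫ t in Ioi (0 : ℝ), (t : ℂ) ^ n * cexp (-(ν * t)) := by
  have hν0 : ν ≠ 0 := by rintro rfl; simp at hν
  have hu (t : ℝ) : HasDerivAt (fun t : ℝ => (t : ℂ) ^ (n + 1)) ((n + 1) * (t : ℂ) ^ n) t := by
    simpa using (hasDerivAt_id t).ofReal_comp.fun_pow (n + 1)
  have hv (t : ℝ) : HasDerivAt (fun t : ℝ => -cexp (-(ν * t)) / ν) (cexp (-(ν * t))) t := by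
    have h : HasDerivAt (fun s : ℝ => -(ν * s)) (-ν) t := by
      simpa using ((hasDerivAt_id t).ofReal_comp.const_mul ν).fun_neg
    refine (h.cexp.neg.div_const ν).congr_deriv ?_
    field_simp
  have hu'v : IntegrableOn (fun t : ℝ => (n + 1) * (t : ℂ) ^ n * (-cexp (-(ν * t)) / ν)) (Ioi 0) :=
    IntegrableOn.congr_fun ((integrableOn_pow_mul_cexp_neg_mul_Ioi hν n).const_mul (-(n + 1) / ν))
      (fun t _ => by ring) measurableSet_Ioi
  have h_zero :
      Tendsto (fun t : ℝ => (t : ℂ) ^ (n + 1) * (-cexp (-(ν * t)) / ν)) (𝓝[>] 0) (𝓝 0) := by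
    have : ContinuousAt (fun t : ℝ => (t : ℂ) ^ (n + 1) * (-cexp (-(ν * t)) / ν)) 0 := by fun_prop
    simpa using this.tendsto.mono_left nhdsWithin_le_nhds
  have h_infty : Tendsto (fun t : ℝ => (t : ℂ) ^ (n + 1) * (-cexp (-(ν * t)) / ν)) atTop (𝓝 0) := by
    simpa [div_eq_mul_inv, mul_assoc] using
      ((tendsto_pow_mul_cexp_neg_mul_atTop hν (n + 1)).neg.mul_const ν⁻¹)
  rw [integral_Ioi_mul_deriv_eq_deriv_mul (fun t _ => hu t) (fun t _ => hv t)
    (integrableOn_pow_mul_cexp_neg_mul_Ioi hν (n + 1)) hu'v h_zero h_infty, ← integral_const_mul,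
    sub_self, zero_sub, ← integral_neg]
  congr 1 with t
  field_simp

lemma integral_pow_mul_cexp_neg_mul_Ioi {ν : ℂ} (hν : 0 < ν.re) (n : ℕ) :
    ∫ t in Ioi (0 : ℝ), (t : ℂ) ^ n * cexp (-(ν * t)) = n ! / ν ^ (n + 1) := by
  have hν0 : ν ≠ 0 := by rintro rfl; simp at hν
  induction n with
  | zero => simpa [neg_mul] using integral_exp_mul_complex_Ioi (a := -ν) (by simpa) 0
  | succ n ih =>
    rw [integral_pow_succ_mul_cexp_neg_mul_Ioi hν, ih]
    push_cast [Nat.factorial_succ]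
    field_simp
    ring

lemma integral_pow_mul_exp_neg_mul_Ioi {c : ℝ} (hc : 0 < c) (n : ℕ) :
    ∫ t in Ioi (0 : ℝ), t ^ n * rexp (-(c * t)) = n ! / c ^ (n + 1) := by
  exact_mod_cast integral_pow_mul_cexp_neg_mul_Ioi (ν := c) (by simpa) n

lemma Real.exp_neg_le_one_sub_add_sq_div_two {t : ℝ} (ht : 0 ≤ t) :
    rexp (-t) ≤ 1 - t + t ^ 2 / 2 := by
  let g : ℝ → ℝ := fun s => 1 - s + s ^ 2 / 2 - rexp (-s)
  have hderiv (s : ℝ) : deriv g s = -1 + s + rexp (-s) := by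
    simp (disch := fun_prop) [g]
    ring
  have hmono : Monotone g := monotone_of_deriv_nonneg (by fun_prop)
    fun s => by rw [hderiv]; linarith [add_one_le_exp (-s)]
  have h0 : g 0 ≤ g t := hmono ht
  norm_num [g] at h0
  linarith

lemma abs_exp_neg_sq_sub_one_add_sq_le (y : ℝ) : |rexp (-y ^ 2) - 1 + y ^ 2| ≤ y ^ 4 / 2 := by
  have h := Real.exp_neg_le_one_sub_add_sq_div_two (sq_nonneg y)
  rw [abs_le]
  constructor <;> nlinarith [add_one_le_exp (-y ^ 2)]

theorem norm_integral_cexp_neg_sq_sub_mul_sub_le {ν : ℂ} (hν : 0 < ν.re) :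
    ‖(∫ y in Ioi (0 : ℝ), cexp (-(y : ℂ) ^ 2 - ν * y)) - (1 / ν - 2 / ν ^ 3)‖ ≤
      12 / ν.re ^ 5 := by
  set R : ℝ → ℂ := fun y => ((rexp (-y ^ 2) - 1 + y ^ 2 : ℝ) : ℂ) * cexp (-(ν * y))
  have hsplit (y : ℝ) : cexp (-(y : ℂ) ^ 2 - ν * y) =
      R y + (y : ℂ) ^ 0 * cexp (-(ν * y)) - (y : ℂ) ^ 2 * cexp (-(ν * y)) := by
    have : -(y : ℂ) ^ 2 - ν * y = ((-y ^ 2 : ℝ) : ℂ) + -(ν * y) := by push_cast; ring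
    rw [this, Complex.exp_add, ← ofReal_exp]
    simp only [R]
    push_cast
    ring
  have hR_le : ∀ y ∈ Ioi (0 : ℝ), ‖R y‖ ≤ 1 / 2 * (y ^ 4 * rexp (-(ν.re * y))) := by
    intro y hy
    have := norm_ofReal_pow_mul_cexp_neg_mul ν 0 (le_of_lt hy)
    simp only [pow_zero, one_mul] at this
    rw [norm_mul, this, norm_real, Real.norm_eq_abs]
    nlinarith [abs_exp_neg_sq_sub_one_add_sq_le y, exp_pos (-(ν.re * y))]
  have hdom := (integrableOn_pow_mul_exp_neg_mul_Ioi hν 4).const_mul (1 / 2)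
  have hR : IntegrableOn R (Ioi 0) :=
    hdom.mono' (by fun_prop) ((ae_restrict_iff' measurableSet_Ioi).2 (.of_forall hR_le))
  have h0 := integrableOn_pow_mul_cexp_neg_mul_Ioi hν 0
  have h2 := integrableOn_pow_mul_cexp_neg_mul_Ioi hν 2
  have hrem : (∫ y in Ioi (0 : ℝ), cexp (-(y : ℂ) ^ 2 - ν * y)) - (1 / ν - 2 / ν ^ 3) =
      ∫ y in Ioi (0 : ℝ), R y := by
    simp_rw [hsplit]
    rw [integral_sub (by exact hR.add h0) h2, integral_add hR h0,
      integral_pow_mul_cexp_neg_mul_Ioi hν 0, integral_pow_mul_cexp_neg_mul_Ioi hν 2]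
    norm_num
  rw [hrem]
  calc ‖∫ y in Ioi (0 : ℝ), R y‖ ≤ ∫ y in Ioi (0 : ℝ), 1 / 2 * (y ^ 4 * rexp (-(ν.re * y))) :=
        norm_integral_le_of_norm_le hdom ((ae_restrict_iff' measurableSet_Ioi).2 (.of_forall hR_le))
    _ = 12 / ν.re ^ 5 := by
        rw [integral_const_mul, integral_pow_mul_exp_neg_mul_Ioi hν 4]
        norm_num [Nat.factorial]
        ring

lemma abs_cos_sub_one_add_three_mul_sq_le (x : ℝ) : |Real.cos x - 1 + 3 * x ^ 2| ≤ 3 * x ^ 2 := by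
  have := one_sub_sq_div_two_le_cos (x := x)
  rw [abs_le]
  constructor <;> nlinarith [cos_le_one x]

lemma abs_sin_sub_three_mul_add_pow_three_le {x : ℝ} (hx : |x| ≤ 1) :
    |Real.sin x - 3 * x + x ^ 3| ≤ 2 * |x| := by
  wlog h0 : 0 ≤ x generalizing x
  · have h := this (x := -x) (by rwa [abs_neg]) (by linarith)
    rw [Real.sin_neg, abs_neg, ← abs_neg] at h
    convert h using 2
    ring
  rw [abs_of_nonneg h0] at hx ⊢
  rcases h0.eq_or_lt with rfl | hpos
  · simp
  have hcube : x ^ 3 ≤ x := by nlinarith [mul_nonneg h0 h0]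
  have := sin_lt hpos
  have := sin_gt_sub_cube hpos
  rw [abs_le]
  constructor <;> nlinarith

lemma norm_one_sub_I_mul_ofReal_sq (x : ℝ) : ‖1 - I * x‖ ^ 2 = 1 + x ^ 2 := by
  rw [Complex.sq_norm, normSq_apply]; simp; ring

lemma one_le_norm_one_sub_I_mul_ofReal (x : ℝ) : 1 ≤ ‖1 - I * x‖ := by
  nlinarith [norm_one_sub_I_mul_ofReal_sq x, norm_nonneg (1 - I * x), sq_nonneg x]

lemma one_sub_I_mul_ofReal_ne_zero (x : ℝ) : 1 - I * x ≠ 0 :=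
  norm_pos_iff.1 (one_pos.trans_le (one_le_norm_one_sub_I_mul_ofReal x))

lemma norm_cexp_neg_I_mul_div_sub_le {x : ℝ} (hx : |x| ≤ 1) :
    ‖cexp (-(I * x)) / (1 - I * x) - (1 - x ^ 2 / 2)‖ ≤ 13 / 18 * |x| ^ 3 := by
  set w : ℂ := -(I * x)
  have hw : ‖w‖ = |x| := by simp [w]
  have hz := one_sub_I_mul_ofReal_ne_zero x
  -- `(1 - x²/2)(1 - ix)` agrees with the quadratic Taylor polynomial of `e^w` up to `ix³/2`
  have hnum : cexp w / (1 - I * x) - (1 - x ^ 2 / 2) =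
      ((cexp w - ∑ m ∈ Finset.range 3, w ^ m / m !) - I * x ^ 3 / 2) / (1 - I * x) := by
    simp only [Finset.sum_range_succ, Finset.sum_range_zero, w]
    field_simp
    linear_combination 2 * (x : ℂ) ^ 2 * I_sq
  have htaylor := exp_bound (x := w) (by rw [hw]; exact hx) (n := 3) (by norm_num)
  rw [hnum, norm_div]
  calc _ ≤ (|x| ^ 3 * (2 / 9) + |x| ^ 3 / 2) / 1 := by
        gcongr
        · refine (norm_sub_le _ _).trans ?_
          gcongr
          · refine htaylor.trans_eq ?_; rw [hw]; norm_num [Nat.factorial]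
          · simp
        · exact one_le_norm_one_sub_I_mul_ofReal x
    _ = 13 / 18 * |x| ^ 3 := by ring

lemma norm_one_sub_cexp_neg_I_mul_div_pow_three_le {x : ℝ} (hx : |x| ≤ 1) :
    ‖1 - cexp (-(I * x)) / (1 - I * x) ^ 3‖ ≤ 2 * |x| := by
  set z : ℂ := 1 - I * x
  have hz : 0 < ‖z‖ := one_pos.trans_le (one_le_norm_one_sub_I_mul_ofReal x)
  have hparts : z ^ 3 - cexp (-(I * x)) =
      ((1 - 3 * x ^ 2 - Real.cos x : ℝ) : ℂ) + ((Real.sin x - 3 * x + x ^ 3 : ℝ) : ℂ) * I := by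
    apply Complex.ext <;>
      simp [z, Complex.exp_re, Complex.exp_im, pow_succ, cos_ofReal_re, sin_ofReal_re] <;> ring
  have hnum : ‖z ^ 3 - cexp (-(I * x))‖ ≤ 2 * |x| * ‖z‖ ^ 3 := by
    rw [← pow_le_pow_iff_left₀ (norm_nonneg _) (by positivity) two_ne_zero, hparts,
      norm_add_mul_I, sq_sqrt (by positivity), mul_pow, ← pow_mul,
      show ‖z‖ ^ (3 * 2) = (‖z‖ ^ 2) ^ 3 by ring, norm_one_sub_I_mul_ofReal_sq]
    obtain ⟨hre₁, hre₂⟩ := abs_le.1 (abs_cos_sub_one_add_three_mul_sq_le x)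
    obtain ⟨him₁, him₂⟩ := abs_le.1 (abs_sin_sub_three_mul_add_pow_three_le hx)
    have hre := sq_le_sq' hre₁ hre₂
    have him := sq_le_sq' him₁ him₂
    rw [mul_pow, sq_abs] at him
    have : 4 * x ^ 2 + 9 * x ^ 4 ≤ (2 * |x|) ^ 2 * (1 + x ^ 2) ^ 3 := by
      rw [mul_pow, sq_abs]; nlinarith [pow_nonneg (sq_nonneg x) 3, pow_nonneg (sq_nonneg x) 4]
    nlinarith
  rwa [one_sub_div (pow_ne_zero 3 (norm_pos_iff.1 hz)), norm_div, norm_pow,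
    div_le_iff₀ (by positivity)]

theorem norm_two_mul_cexp_mul_integral_sub_le {κ x : ℝ} (hκ : 0 < κ) (hx : |x| ≤ 1) :
    ‖2 * κ * cexp (-(I * x)) *
        (∫ y in Ioi (0 : ℝ), cexp (-(y : ℂ) ^ 2 - 2 * κ * (1 - I * x) * y)) -
        (1 - x ^ 2 / 2 - 1 / (2 * κ ^ 2))‖ ≤
      13 / 18 * |x| ^ 3 + |x| / κ ^ 2 + 3 / (4 * κ ^ 4) := by
  set z : ℂ := 1 - I * x
  set ν : ℂ := 2 * κ * z
  have hz : z ≠ 0 := one_sub_I_mul_ofReal_ne_zero x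
  have hκ' : (κ : ℂ) ≠ 0 := by exact_mod_cast hκ.ne'
  have hνre : ν.re = 2 * κ := by simp [ν, z]
  set E := (∫ y in Ioi (0 : ℝ), cexp (-(y : ℂ) ^ 2 - ν * y)) - (1 / ν - 2 / ν ^ 3) with hE_def
  have hE : ‖E‖ ≤ 12 / (2 * κ) ^ 5 :=
    hνre ▸ norm_integral_cexp_neg_sq_sub_mul_sub_le (by rw [hνre]; positivity)
  have hdecomp : 2 * κ * cexp (-(I * x)) * (∫ y in Ioi (0 : ℝ), cexp (-(y : ℂ) ^ 2 - ν * y)) -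
        (1 - x ^ 2 / 2 - 1 / (2 * κ ^ 2)) =
      (cexp (-(I * x)) / z - (1 - x ^ 2 / 2)) + 1 / (2 * κ ^ 2) * (1 - cexp (-(I * x)) / z ^ 3) +
        2 * κ * cexp (-(I * x)) * E := by
    rw [eq_add_of_sub_eq' hE_def.symm]
    simp only [ν]
    field_simp
    ring
  rw [hdecomp]
  calc _ ≤ 13 / 18 * |x| ^ 3 + 1 / (2 * κ ^ 2) * (2 * |x|) + 2 * κ * 1 * (12 / (2 * κ) ^ 5) := by
        refine (norm_add₃_le).trans (add_le_add_three (norm_cexp_neg_I_mul_div_sub_le hx) ?_ ?_)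
        · rw [norm_mul]
          gcongr
          · simp [abs_of_pos hκ]
          · exact norm_one_sub_cexp_neg_I_mul_div_pow_three_le hx
        · rw [norm_mul, norm_mul]
          gcongr
          · simp [abs_of_pos hκ]
          · simp [norm_exp]
    _ = 13 / 18 * |x| ^ 3 + |x| / κ ^ 2 + 3 / (4 * κ ^ 4) := by
        field_simp
        ring

section Constants

variable {κ θ : ℝ}

lemma three_div_four_mul_le_C1 (hκ : 0 < κ) : 3 / (4 * κ) ≤ C1 κ θ := by
  have h6 : 6 / κ ≤ 6 / κ * (1 + √(1 + κ ^ (2 * θ - 2)) / rexp 1) :=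
    le_mul_of_one_le_right (by positivity) (le_add_of_nonneg_right (by positivity))
  have : 0 ≤ 2 * √π * √(1 + κ ^ (2 * θ - 2)) / rexp 1 := by positivity
  have : 0 ≤ 3 / κ ^ 3 := by positivity
  rw [C1, show 3 / (4 * κ) = 1 / 8 * (6 / κ) by field_simp; norm_num]
  linarith

lemma seven_div_two_le_C2 (hκ : 1 < κ) (hθ : θ < 1) : 7 / 2 ≤ C2 κ θ := by
  have hlt : κ ^ (θ - 1) < 1 := Real.rpow_lt_one_of_one_lt_of_neg hκ (by linarith)
  have hpos : 0 < κ ^ (θ - 1) := Real.rpow_pos_of_pos (by linarith) _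
  have h1 : 1 ≤ 1 / (1 - κ ^ (θ - 1)) := by rw [le_div_iff₀ (by linarith)]; linarith
  have h2 : 1 ≤ 1 / (1 - κ ^ (θ - 1) / 4) := by rw [le_div_iff₀ (by linarith)]; linarith
  rw [C2]
  nlinarith

lemma one_le_C3 (hκ : 0 ≤ κ) : 1 ≤ C3 κ θ := by
  rw [C3, one_le_sqrt]
  linarith [Real.rpow_nonneg hκ (2 * θ - 2)]

lemma one_le_C41 (hκ : 1 < κ) (hθ : θ < 1) : 1 ≤ C41 κ θ := by
  have hC2 := seven_div_two_le_C2 hκ hθ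
  have hC3 := one_le_C3 (θ := θ) (by linarith : 0 ≤ κ)
  have : 0 ≤ κ ^ (3 * θ - 3) * C2 κ θ * C3 κ θ := by positivity
  have : 0 ≤ κ ^ (θ - 1) := by positivity
  rw [C41]
  linarith

lemma thirteen_div_eighteen_le_C42 (hκ : 1 < κ) (hθ : θ < 1) : 13 / 18 ≤ C42 κ θ := by
  have hC2 := seven_div_two_le_C2 hκ hθ
  have : 1 / (2 * κ ^ 2) ≤ 1 / 2 := by
    gcongr; nlinarith
  rw [C42]
  nlinarith

lemma le_Cfun (hκ : 1 < κ) (hθ : θ < 1) (u : ℝ) :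
    13 / 18 * |u| ^ 3 + |u| + 3 / (4 * κ) ≤ Cfun κ θ u := by
  have := three_div_four_mul_le_C1 (θ := θ) (by linarith : 0 < κ)
  have := one_le_C41 hκ hθ
  have := thirteen_div_eighteen_le_C42 hκ hθ
  rw [Cfun]
  nlinarith [abs_nonneg u, pow_nonneg (abs_nonneg u) 3]

end Constants

theorem inner_factor_approx_general (κ θ u : ℝ) (hκ : 1 < κ) (hθ1 : θ < 1 / 3)
    (hu : |u| ≤ κ ^ θ) (ν : ℂ) (hν : ν = 2 * (κ : ℂ) * (1 - Complex.I * u / κ)) :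
    ‖(2 * (κ : ℂ)) * Complex.exp (-(Complex.I * u) / κ) *
        (∫ y in Set.Ioi (0 : ℝ), Complex.exp (-(y : ℂ) ^ 2 - ν * y)) -
        ((1 : ℂ) - ((u : ℂ) ^ 2 + 1) / (2 * (κ : ℂ) ^ 2))‖ ≤
      Cfun κ θ u / κ ^ (3 : ℕ) := by
  have hκ0 : 0 < κ := by linarith
  have hκ' : (κ : ℂ) ≠ 0 := by exact_mod_cast hκ0.ne'
  have hx : |u / κ| ≤ 1 := by
    rw [abs_div, abs_of_pos hκ0, div_le_one hκ0]
    simpa using hu.trans (Real.rpow_le_rpow_of_exponent_le hκ.le (by linarith : θ ≤ 1))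
  have hu' : (u : ℂ) = κ * ((u / κ : ℝ) : ℂ) := by push_cast; field_simp
  have hexp : -(I * u) / κ = -(I * ((u / κ : ℝ) : ℂ)) := by rw [hu']; field_simp
  have hν' : ν = 2 * κ * (1 - I * ((u / κ : ℝ) : ℂ)) := by rw [hν, hu']; field_simp
  have hpoly : (1 : ℂ) - ((u : ℂ) ^ 2 + 1) / (2 * κ ^ 2) =
      1 - ((u / κ : ℝ) : ℂ) ^ 2 / 2 - 1 / (2 * κ ^ 2) := by rw [hu']; field_simp; ring
  rw [hexp, hν', hpoly, le_div_iff₀ (by positivity)]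
  calc _ ≤ (13 / 18 * |u / κ| ^ 3 + |u / κ| / κ ^ 2 + 3 / (4 * κ ^ 4)) * κ ^ 3 := by
        gcongr
        exact norm_two_mul_cexp_mul_integral_sub_le hκ0 hx
    _ = 13 / 18 * |u| ^ 3 + |u| + 3 / (4 * κ) := by
        rw [abs_div, abs_of_pos hκ0]
        field_simp
    _ ≤ Cfun κ θ u := le_Cfun hκ (by linarith) u

/-- For `κ > 1`, `0 < θ < 1/3`, `|u| ≤ κ^θ` and `ν = 2κ(1 − iu/κ)`,
`|2κ e^{−iu/κ} ∫₀^∞ e^{−y²−νy} dy − (1 − (u² + 1)/(2κ²))| ≤ C_{κ,θ}(u)/κ³`. -/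
theorem inner_factor_approx (κ θ u : ℝ) (hκ : 1 < κ) (hθ0 : 0 < θ) (hθ1 : θ < 1 / 3)
    (hu : |u| ≤ κ ^ θ) (ν : ℂ) (hν : ν = 2 * (κ : ℂ) * (1 - Complex.I * u / κ)) :
    ‖(2 * (κ : ℂ)) * Complex.exp (-(Complex.I * u) / κ) *
        (∫ y in Set.Ioi (0 : ℝ), Complex.exp (-(y : ℂ) ^ 2 - ν * y)) -
        ((1 : ℂ) - ((u : ℂ) ^ 2 + 1) / (2 * (κ : ℂ) ^ 2))‖ ≤
      Cfun κ θ u / κ ^ (3 : ℕ) :=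
  inner_factor_approx_general κ θ u hκ hθ1 hu ν hν
end
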